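/- arXiv:1110.5020 — 2 statements merged into one kernel-verified Lean document; each statement's English description precedes it below -/
import Mathlib

section
/- For any two groups G₁ and G₂, the second integral homology of their free product splits: H₂(G₁ ∗ G₂; ℤ) ≅ H₂(G₁; ℤ) × H₂(G₂; ℤ), where homology is group homology with coefficients in the trivial ℤ-representation. -/
/-! Second integral group homology `H₂(G; ℤ)`, defined as the homology in degree 2 of the
inhomogeneous bar complex `... → ℤ[G³] → ℤ[G²] → ℤ[G]` with the standard boundary maps. -/

/-- The boundary map `d₂ : ℤ[G²] → ℤ[G]`, `d₂(g, h) = h - g*h + g`. -/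
noncomputable def barD2 (G : Type*) [Group G] : ((G × G) →₀ ℤ) →ₗ[ℤ] (G →₀ ℤ) :=
  Finsupp.lift (G →₀ ℤ) ℤ (G × G) fun p =>
    Finsupp.single p.2 1 - Finsupp.single (p.1 * p.2) 1 + Finsupp.single p.1 1

/-- The boundary map `d₃ : ℤ[G³] → ℤ[G²]`,
`d₃(g, h, k) = (h, k) - (g*h, k) + (g, h*k) - (g, h)`. -/
noncomputable def barD3 (G : Type*) [Group G] : ((G × G × G) →₀ ℤ) →ₗ[ℤ] ((G × G) →₀ ℤ) :=
  Finsupp.lift ((G × G) →₀ ℤ) ℤ (G × G × G) fun t =>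
    Finsupp.single (t.2.1, t.2.2) 1 - Finsupp.single (t.1 * t.2.1, t.2.2) 1 +
      Finsupp.single (t.1, t.2.1 * t.2.2) 1 - Finsupp.single (t.1, t.2.1) 1

/-- Second group homology with coefficients in the trivial `ℤ`-representation:
`H₂(G; ℤ) = ker d₂ / im d₃`. -/
noncomputable def H2Z (G : Type*) [Group G] :=
  LinearMap.ker (barD2 G) ⧸
    (LinearMap.range (barD3 G)).comap (LinearMap.ker (barD2 G)).subtype

noncomputable instance (G : Type*) [Group G] : AddCommGroup (H2Z G) :=
  inferInstanceAs <| AddCommGroup <|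
    LinearMap.ker (barD2 G) ⧸
      (LinearMap.range (barD3 G)).comap (LinearMap.ker (barD2 G)).subtype


/-!
The inclusions `iₖ : Gₖ → G₁ ∗ G₂` and retractions `pₖ : G₁ ∗ G₂ → Gₖ` induce maps both ways
between `H₂(G₁ ∗ G₂)` and `H₂(G₁) × H₂(G₂)`; by functoriality one composite is the identity.
For the other, a ℤ-linear map `L` on 2-chains of `G₁ ∗ G₂` that kills boundaries and the chains
`(inl a, inl b)`, `(inr a, inr b)` is a 2-cocycle with trivial coefficients vanishing on both
factors. In the central extension it classifies, the trivial sections over the factors glue, by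
the universal property of the free product, to a splitting; hence the cocycle is a coboundary
and `L` kills every cycle. Applied to `z ↦ i₁ p₁ z + i₂ p₂ z - z` (corrected by a multiple of the
augmentation, which vanishes on cycles), taken modulo boundaries, this gives the other identity.
-/

open Monoid Finsupp

structure TwoCocycle (G A : Type*) [Monoid G] [AddCommGroup A] where
  toFun : G → G → A
  map_one_one : toFun 1 1 = 0
  cocycle : ∀ g h k, toFun (g * h) k + toFun g h = toFun h k + toFun g (h * k)

namespace TwoCocycle

variable {G A : Type*} [Monoid G] [AddCommGroup A] (c : TwoCocycle G A)

theorem map_one_left (g : G) : c.toFun 1 g = 0 := by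
  simpa [c.map_one_one] using c.cocycle 1 1 g

theorem map_one_right (g : G) : c.toFun g 1 = 0 := by
  simpa [c.map_one_one] using (c.cocycle g 1 1).symm

@[ext]
structure Extension (c : TwoCocycle G A) where
  fst : A
  snd : G

instance : Mul c.Extension := ⟨fun x y => ⟨x.fst + y.fst + c.toFun x.snd y.snd, x.snd * y.snd⟩⟩

instance : One c.Extension := ⟨⟨0, 1⟩⟩

@[simp] theorem Extension.fst_mul (x y : c.Extension) :
    (x * y).fst = x.fst + y.fst + c.toFun x.snd y.snd := rfl

@[simp] theorem Extension.snd_mul (x y : c.Extension) : (x * y).snd = x.snd * y.snd := rfl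

@[simp] theorem Extension.fst_one : (1 : c.Extension).fst = 0 := rfl

@[simp] theorem Extension.snd_one : (1 : c.Extension).snd = 1 := rfl

instance : Monoid c.Extension where
  mul_assoc x y z := by
    ext
    · calc (x * y * z).fst
          = x.fst + y.fst + z.fst + (c.toFun (x.snd * y.snd) z.snd + c.toFun x.snd y.snd) := by
            simp only [Extension.fst_mul, Extension.snd_mul]; abel
        _ = x.fst + y.fst + z.fst + (c.toFun y.snd z.snd + c.toFun x.snd (y.snd * z.snd)) := by
            rw [c.cocycle]
        _ = (x * (y * z)).fst := by simp only [Extension.fst_mul, Extension.snd_mul]; abel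
    · exact mul_assoc x.snd y.snd z.snd
  one_mul x := by ext <;> simp [c.map_one_left]
  mul_one x := by ext <;> simp [c.map_one_right]

def Extension.sndHom : c.Extension →* G where
  toFun := Extension.snd
  map_one' := rfl
  map_mul' _ _ := rfl

theorem exists_coboundary_of_coprod {M N : Type*} [Monoid M] [Monoid N]
    (c : TwoCocycle (Coprod M N) A) (hM : ∀ a b, c.toFun (Coprod.inl a) (Coprod.inl b) = 0)
    (hN : ∀ a b, c.toFun (Coprod.inr a) (Coprod.inr b) = 0) :
    ∃ β : Coprod M N → A, ∀ g h, c.toFun g h = β g + β h - β (g * h) := by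
  let sM : M →* c.Extension :=
    { toFun a := ⟨0, Coprod.inl a⟩
      map_one' := by ext <;> simp
      map_mul' a b := by ext <;> simp [hM] }
  let sN : N →* c.Extension :=
    { toFun a := ⟨0, Coprod.inr a⟩
      map_one' := by ext <;> simp
      map_mul' a b := by ext <;> simp [hN] }
  let s := Coprod.lift sM sN
  have hs : (Extension.sndHom c).comp s = MonoidHom.id _ := Coprod.hom_ext rfl rfl
  have hsnd (g) : (s g).snd = g := DFunLike.congr_fun hs g
  refine ⟨fun g => -(s g).fst, fun g h => ?_⟩
  have := congrArg Extension.fst (map_mul s g h)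
  rw [Extension.fst_mul, hsnd, hsnd] at this
  change c.toFun g h = -(s g).fst + -(s h).fst - -(s (g * h)).fst
  rw [this]
  abel

end TwoCocycle

section BarComplex

variable {G H K : Type*} [Group G] [Group H] [Group K]

@[simp] theorem barD2_single (g h : G) : barD2 G (single (g, h) 1) =
    single h 1 - single (g * h) 1 + single g 1 := by
  simp [barD2]

@[simp] theorem barD3_single (g h k : G) : barD3 G (single (g, h, k) 1) =
    single (h, k) 1 - single (g * h, k) 1 + single (g, h * k) 1 - single (g, h) 1 := by
  simp [barD3]

theorem barD2_comp_barD3 : barD2 G ∘ₗ barD3 G = 0 := by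
  refine lhom_ext' fun ⟨g, h, k⟩ => LinearMap.ext_ring ?_
  simp only [LinearMap.comp_apply, lsingle_apply, barD3_single, map_sub, map_add, barD2_single,
    mul_assoc, LinearMap.zero_apply]
  abel

theorem barD2_barD3 (w : (G × G × G) →₀ ℤ) : barD2 G (barD3 G w) = 0 :=
  LinearMap.congr_fun barD2_comp_barD3 w

noncomputable def augmentation (X : Type*) : (X →₀ ℤ) →ₗ[ℤ] ℤ :=
  linearCombination ℤ fun _ => 1

@[simp] theorem augmentation_single {X : Type*} (x : X) (n : ℤ) :
    augmentation X (single x n) = n := by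
  simp [augmentation]

theorem augmentation_barD2 (z : (G × G) →₀ ℤ) : augmentation G (barD2 G z) = augmentation _ z := by
  induction z using Finsupp.induction_linear with
  | zero => simp
  | add _ _ h₁ h₂ => simp only [map_add, h₁, h₂]
  | single p n =>
    rw [← smul_single_one, map_smul, map_smul, barD2_single]
    simp

theorem augmentation_eq_zero_of_barD2_eq_zero {z : (G × G) →₀ ℤ} (hz : barD2 G z = 0) :
    augmentation _ z = 0 := by
  rw [← augmentation_barD2, hz, map_zero]

theorem augmentation_barD3 (w : (G × G × G) →₀ ℤ) : augmentation _ (barD3 G w) = 0 :=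
  augmentation_eq_zero_of_barD2_eq_zero (barD2_barD3 w)

noncomputable def barMap₁ (f : G →* H) : (G →₀ ℤ) →ₗ[ℤ] (H →₀ ℤ) :=
  lmapDomain ℤ ℤ f

noncomputable def barMap₂ (f : G →* H) : ((G × G) →₀ ℤ) →ₗ[ℤ] ((H × H) →₀ ℤ) :=
  lmapDomain ℤ ℤ (Prod.map f f)

noncomputable def barMap₃ (f : G →* H) : ((G × G × G) →₀ ℤ) →ₗ[ℤ] ((H × H × H) →₀ ℤ) :=
  lmapDomain ℤ ℤ (Prod.map f (Prod.map f f))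

@[simp] theorem barMap₁_single (f : G →* H) (g : G) (n : ℤ) :
    barMap₁ f (single g n) = single (f g) n := by
  simp [barMap₁]

@[simp] theorem barMap₂_single (f : G →* H) (g h : G) (n : ℤ) :
    barMap₂ f (single (g, h) n) = single (f g, f h) n := by
  simp [barMap₂]

@[simp] theorem barMap₃_single (f : G →* H) (g h k : G) (n : ℤ) :
    barMap₃ f (single (g, h, k) n) = single (f g, f h, f k) n := by
  simp [barMap₃]

theorem barD2_barMap₂ (f : G →* H) (z : (G × G) →₀ ℤ) :
    barD2 H (barMap₂ f z) = barMap₁ f (barD2 G z) := by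
  suffices barD2 H ∘ₗ barMap₂ f = barMap₁ f ∘ₗ barD2 G from LinearMap.congr_fun this z
  ext ⟨g, h⟩
  simp

theorem barD3_barMap₃ (f : G →* H) (w : (G × G × G) →₀ ℤ) :
    barD3 H (barMap₃ f w) = barMap₂ f (barD3 G w) := by
  suffices barD3 H ∘ₗ barMap₃ f = barMap₂ f ∘ₗ barD3 G from LinearMap.congr_fun this w
  ext ⟨g, h, k⟩
  simp

theorem barMap₂_comp (f : H →* K) (g : G →* H) (z : (G × G) →₀ ℤ) :
    barMap₂ (f.comp g) z = barMap₂ f (barMap₂ g z) := by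
  simp only [barMap₂, lmapDomain_apply, ← mapDomain_comp]
  rfl

theorem barMap₂_id (z : (G × G) →₀ ℤ) : barMap₂ (MonoidHom.id G) z = z := by
  simp only [barMap₂, lmapDomain_apply, MonoidHom.coe_id, Prod.map_id, mapDomain_id]

theorem barMap₂_one (z : (G × G) →₀ ℤ) :
    barMap₂ (1 : G →* H) z = single (1, 1) (augmentation _ z) := by
  suffices barMap₂ (1 : G →* H) = (lsingle (1, 1)) ∘ₗ augmentation _ from
    LinearMap.congr_fun this z
  ext ⟨g, h⟩
  simp

end BarComplex

section Homology

variable {G H K : Type*} [Group G] [Group H] [Group K]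

noncomputable def cyclesMap (f : G →* H) :
    LinearMap.ker (barD2 G) →ₗ[ℤ] LinearMap.ker (barD2 H) :=
  (barMap₂ f).restrict fun z hz => by
    rw [LinearMap.mem_ker] at hz ⊢
    rw [barD2_barMap₂, hz, map_zero]

@[simp] theorem coe_cyclesMap (f : G →* H) (z : LinearMap.ker (barD2 G)) :
    (cyclesMap f z : (H × H) →₀ ℤ) = barMap₂ f z :=
  rfl

namespace H2Z

noncomputable def mk : LinearMap.ker (barD2 G) →+ H2Z G :=
  (Submodule.mkQ _).toAddMonoidHom

theorem mk_surjective : Function.Surjective (mk : LinearMap.ker (barD2 G) → H2Z G) :=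
  Submodule.mkQ_surjective _

theorem mk_eq_mk_iff {z z' : LinearMap.ker (barD2 G)} :
    mk z = mk z' ↔ (z : (G × G) →₀ ℤ) - z' ∈ LinearMap.range (barD3 G) :=
  Submodule.Quotient.eq _

noncomputable def map (f : G →* H) : H2Z G →+ H2Z H :=
  (Submodule.mapQ _ _ (cyclesMap f) fun z hz => by
    obtain ⟨w, hw⟩ := Submodule.mem_comap.mp hz
    exact ⟨barMap₃ f w, by rw [barD3_barMap₃, hw]; rfl⟩).toAddMonoidHom

@[simp] theorem map_mk (f : G →* H) (z : LinearMap.ker (barD2 G)) :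
    map f (mk z) = mk (cyclesMap f z) :=
  rfl

theorem map_comp (f : H →* K) (g : G →* H) (x : H2Z G) :
    map (f.comp g) x = map f (map g x) := by
  obtain ⟨z, rfl⟩ := mk_surjective x
  simp only [map_mk]
  congr 1
  ext1
  simp [barMap₂_comp]

theorem map_id (x : H2Z G) : map (MonoidHom.id G) x = x := by
  obtain ⟨z, rfl⟩ := mk_surjective x
  simp only [map_mk]
  congr 1
  ext1
  simp [barMap₂_id]

theorem map_one (x : H2Z G) : map (1 : G →* H) x = 0 := by
  obtain ⟨z, rfl⟩ := mk_surjective x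
  suffices cyclesMap (1 : G →* H) z = 0 by rw [map_mk, this, map_zero]
  ext1
  simp [barMap₂_one, augmentation_eq_zero_of_barD2_eq_zero z.2]

end H2Z

end Homology

section Coprod

variable {G₁ G₂ : Type*} [Group G₁] [Group G₂]

theorem map_eq_zero_of_barD2_eq_zero_of_coprod {M : Type*} [AddCommGroup M]
    (L : ((Coprod G₁ G₂ × Coprod G₁ G₂) →₀ ℤ) →ₗ[ℤ] M) (hL : ∀ w, L (barD3 _ w) = 0)
    (h₁ : ∀ a b, L (single (Coprod.inl a, Coprod.inl b) 1) = 0)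
    (h₂ : ∀ a b, L (single (Coprod.inr a, Coprod.inr b) 1) = 0)
    {z : (Coprod G₁ G₂ × Coprod G₁ G₂) →₀ ℤ} (hz : barD2 _ z = 0) : L z = 0 := by
  let c : TwoCocycle (Coprod G₁ G₂) M :=
    { toFun g h := L (single (g, h) 1)
      map_one_one := by simpa using h₁ 1 1
      cocycle g h k := by
        have := hL (single (g, h, k) 1)
        rw [barD3_single, map_sub, map_add, map_sub, sub_eq_zero] at this
        rw [← this]
        abel }
  obtain ⟨β, hβ⟩ := c.exists_coboundary_of_coprod h₁ h₂
  have hL : L = linearCombination ℤ β ∘ₗ barD2 _ := by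
    refine lhom_ext' fun ⟨g, h⟩ => LinearMap.ext_ring ?_
    simp only [LinearMap.comp_apply, lsingle_apply, barD2_single, map_sub, map_add,
      linearCombination_single, one_smul]
    rw [show L (single (g, h) 1) = c.toFun g h from rfl, hβ]
    abel
  rw [hL, LinearMap.comp_apply, hz, map_zero]

theorem barMap₂_inl_fst_add_barMap₂_inr_snd_sub_mem_range
    {z : (Coprod G₁ G₂ × Coprod G₁ G₂) →₀ ℤ} (hz : barD2 _ z = 0) :
    barMap₂ Coprod.inl (barMap₂ Coprod.fst z) + barMap₂ Coprod.inr (barMap₂ Coprod.snd z) - z ∈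
      LinearMap.range (barD3 (Coprod G₁ G₂)) := by
  -- `inr ∘ snd` sends `(inl a, inl b)` to `(1, 1)`; the augmentation term cancels it
  let P : ((Coprod G₁ G₂ × Coprod G₁ G₂) →₀ ℤ) →ₗ[ℤ] ((Coprod G₁ G₂ × Coprod G₁ G₂) →₀ ℤ) :=
    barMap₂ Coprod.inl ∘ₗ barMap₂ Coprod.fst + barMap₂ Coprod.inr ∘ₗ barMap₂ Coprod.snd -
      LinearMap.id - lsingle (1, 1) ∘ₗ augmentation _
  have hPz := map_eq_zero_of_barD2_eq_zero_of_coprod ((LinearMap.range (barD3 _)).mkQ ∘ₗ P)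
    (fun w => ?_) (fun a b => ?_) (fun a b => ?_) hz
  · simpa [P, augmentation_eq_zero_of_barD2_eq_zero hz] using
      (Submodule.Quotient.mk_eq_zero _).mp hPz
  · refine (Submodule.Quotient.mk_eq_zero _).mpr ⟨barMap₃ Coprod.inl (barMap₃ Coprod.fst w) +
      barMap₃ Coprod.inr (barMap₃ Coprod.snd w) - w, ?_⟩
    simp [P, barD3_barMap₃, augmentation_barD3]
  · simp [P]
  · simp [P]

end Coprod

namespace H2Z

variable {G₁ G₂ : Type*} [Group G₁] [Group G₂]

theorem map_inl_map_fst_add_map_inr_map_snd (x : H2Z (Coprod G₁ G₂)) :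
    map Coprod.inl (map Coprod.fst x) + map Coprod.inr (map Coprod.snd x) = x := by
  obtain ⟨z, rfl⟩ := mk_surjective x
  rw [map_mk, map_mk, map_mk, map_mk, ← _root_.map_add, mk_eq_mk_iff]
  exact barMap₂_inl_fst_add_barMap₂_inr_snd_sub_mem_range z.2

noncomputable def coprodEquiv : H2Z (Coprod G₁ G₂) ≃+ H2Z G₁ × H2Z G₂ where
  toFun x := (map Coprod.fst x, map Coprod.snd x)
  invFun y := map Coprod.inl y.1 + map Coprod.inr y.2
  left_inv x := by
    beta_reduce
    exact map_inl_map_fst_add_map_inr_map_snd x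
  right_inv _ := by simp [← map_comp, map_id, map_one]
  map_add' x y := by simp

end H2Z

/-- For any two groups `G₁` and `G₂`, the second integral homology of their
free product (coproduct of groups) splits: `H₂(G₁ ∗ G₂; ℤ) ≅ H₂(G₁; ℤ) × H₂(G₂; ℤ)`. -/
theorem h2Z_coprod (G₁ G₂ : Type*) [Group G₁] [Group G₂] :
    Nonempty (H2Z (Monoid.Coprod G₁ G₂) ≃+ H2Z G₁ × H2Z G₂) :=
  ⟨H2Z.coprodEquiv⟩
end

section
/- Let X₁ and X₂ be types, let φᵢ : F(Xᵢ) → Gᵢ (i = 1,2) be surjective homomorphisms from the free groups F(Xᵢ) onto groups Gᵢ, with kernels Rᵢ = ker φᵢ, and let φ : F(X₁ ⊕ X₂) → G₁ ∗ G₂ be the induced surjection from the free group on the disjoint union of X₁ and X₂ onto the free product, with kernel R = ker φ. Then there is a group isomorphism (R ∩ [F,F])/[R,F] ≅ (R₁ ∩ [F₁,F₁])/[R₁,F₁] × (R₂ ∩ [F₂,F₂])/[R₂,F₂], where F = F(X₁ ⊕ X₂) and Fᵢ = F(Xᵢ). -/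
open Monoid

/-- The Schur multiplier of `G` computed via Hopf's formula from a free presentation
`1 → R → F → G → 1`:  `M(G) = (R ∩ [F,F]) / [R,F]`. -/
def hopfMultiplier {F : Type*} [Group F] (R : Subgroup F) [R.Normal] :=
  (R ⊓ commutator F : Subgroup F) ⧸
    ((⁅R, (⊤ : Subgroup F)⁆).subgroupOf (R ⊓ commutator F))

noncomputable instance {F : Type*} [Group F] (R : Subgroup F) [R.Normal] :
    Group (hopfMultiplier R) :=
  inferInstanceAs <| Group <|
    (R ⊓ commutator F : Subgroup F) ⧸
      ((⁅R, (⊤ : Subgroup F)⁆).subgroupOf (R ⊓ commutator F))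

/-- The surjection `F(X₁ ⊕ X₂) → G₁ ∗ G₂` induced by surjections `φᵢ : F(Xᵢ) → Gᵢ`:
a generator from `X₁` is sent to the image in `G₁ ∗ G₂` of its `φ₁`-image, and similarly
for `X₂`. -/
def inducedPresentation {X₁ X₂ G₁ G₂ : Type*} [Group G₁] [Group G₂]
    (φ₁ : FreeGroup X₁ →* G₁) (φ₂ : FreeGroup X₂ →* G₂) :
    FreeGroup (X₁ ⊕ X₂) →* Coprod G₁ G₂ :=
  FreeGroup.lift <| Sum.elim
    (fun x => Coprod.inl (φ₁ (FreeGroup.of x)))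
    (fun x => Coprod.inr (φ₂ (FreeGroup.of x)))

/-!
The retractions `πᵢ : F(X₁ ⊕ X₂) → F(Xᵢ)` and the inclusions `ιᵢ : F(Xᵢ) → F(X₁ ⊕ X₂)` induce
homomorphisms `Φ : M(R) → M(R₁) × M(R₂)` and `Ψ : M(R₁) × M(R₂) → M(R)` of Hopf quotients, and
`Φ ∘ Ψ = id` because each `πᵢ ∘ ιⱼ` is the identity or trivial. For `Ψ ∘ Φ = id` one needs
`w ≡ ι₁(π₁ w) · ι₂(π₂ w) mod [R, F]` for `w ∈ R`. As the `φᵢ` are onto, `R` is the normal closure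
of `ι₁(R₁) ∪ ι₂(R₂)`; modulo `[R, F]` the image of `R` is central, so conjugation fixes the
generators and both sides of the congruence are multiplicative on `R`.
-/

open scoped commutatorElement

theorem QuotientGroup.mk_mem_center_of_mem {F : Type*} [Group F] {R : Subgroup F} [R.Normal]
    {r : F} (hr : r ∈ R) :
    (r : F ⧸ ⁅R, (⊤ : Subgroup F)⁆) ∈ Subgroup.center (F ⧸ ⁅R, ⊤⁆) := by
  refine Subgroup.mem_center_iff.2 fun g => ?_
  induction g using QuotientGroup.induction_on with | H g =>
  have hcomm : ⁅(r : F ⧸ ⁅R, (⊤ : Subgroup F)⁆), (g : F ⧸ ⁅R, (⊤ : Subgroup F)⁆)⁆ = 1 := by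
    rw [← QuotientGroup.mk'_apply, ← QuotientGroup.mk'_apply, ← map_commutatorElement,
      QuotientGroup.mk'_apply, QuotientGroup.eq_one_iff]
    exact Subgroup.commutator_mem_commutator hr (Subgroup.mem_top g)
  exact (commutatorElement_eq_one_iff_commute.1 hcomm).eq.symm

theorem Subgroup.apply_eq_mul_of_mem_normalClosure {G Q : Type*} [Group G] [Group Q]
    {U : Set G} {a b c : G →* Q} (ha : ∀ u ∈ U, a u ∈ center Q) (hb : ∀ u ∈ U, b u ∈ center Q)
    (hc : ∀ u ∈ U, c u ∈ center Q) (habc : ∀ u ∈ U, c u = a u * b u) {x : G}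
    (hx : x ∈ normalClosure U) : c x = a x * b x := by
  have hb' : normalClosure U ≤ (center Q).comap b := normalClosure_le_normal hb
  induction hx using closure_induction with
  | mem z hz =>
    obtain ⟨u, hu, hconj⟩ := Group.mem_conjugatesOfSet_iff.1 hz
    obtain ⟨g, rfl⟩ := isConj_iff.1 hconj
    have conj_central {q : Q} (p : Q) (hq : q ∈ center Q) : p * q * p⁻¹ = q := by
      rw [mem_center_iff.1 hq p, mul_inv_cancel_right]
    simp only [map_mul, map_inv]
    rw [conj_central _ (hc u hu), conj_central _ (ha u hu), conj_central _ (hb u hu), habc u hu]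
  | one => simp
  | mul x y hx _ ihx ihy =>
    rw [map_mul, map_mul, map_mul, ihx, ihy, mul_assoc, ← mul_assoc (b x),
      ← mem_center_iff.1 (hb' hx), mul_assoc, mul_assoc]
  | inv x hx ih =>
    rw [map_inv, map_inv, map_inv, ih, mul_inv_rev]
    exact (mem_center_iff.1 (inv_mem (hb' hx)) _).symm

theorem Subgroup.commutator_le_comap_commutator {G G' : Type*} [Group G] [Group G'] (f : G →* G')
    {H₁ H₂ : Subgroup G} {K₁ K₂ : Subgroup G'} (h₁ : H₁ ≤ K₁.comap f) (h₂ : H₂ ≤ K₂.comap f) :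
    ⁅H₁, H₂⁆ ≤ ⁅K₁, K₂⁆.comap f :=
  commutator_le.2 fun g hg h hh => by
    rw [mem_comap, map_commutatorElement]
    exact commutator_mem_commutator (h₁ hg) (h₂ hh)

theorem QuotientGroup.mk_eq_mk_mul_mk_of_retractions {F A B : Type*} [Group F] [Group A]
    [Group B] {R : Subgroup F} [R.Normal] {R₁ : Subgroup A} {R₂ : Subgroup B}
    (ι₁ : A →* F) (ι₂ : B →* F) (π₁ : F →* A) (π₂ : F →* B)
    (h₁₁ : ∀ a, π₁ (ι₁ a) = a) (h₁₂ : ∀ b, π₁ (ι₂ b) = 1)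
    (h₂₁ : ∀ a, π₂ (ι₁ a) = 1) (h₂₂ : ∀ b, π₂ (ι₂ b) = b)
    (hR : R = Subgroup.normalClosure (ι₁ '' R₁ ∪ ι₂ '' R₂)) {x : F} (hx : x ∈ R) :
    (x : F ⧸ ⁅R, (⊤ : Subgroup F)⁆) = (ι₁ (π₁ x) : F ⧸ ⁅R, (⊤ : Subgroup F)⁆) * ι₂ (π₂ x) := by
  set q := QuotientGroup.mk' ⁅R, (⊤ : Subgroup F)⁆
  set a := q.comp (ι₁.comp π₁)
  set b := q.comp (ι₂.comp π₂)
  have hU : ι₁ '' R₁ ∪ ι₂ '' R₂ ⊆ R := hR ▸ Subgroup.subset_normalClosure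
  have hq : ∀ u ∈ ι₁ '' R₁ ∪ ι₂ '' R₂, q u ∈ Subgroup.center _ := fun u hu =>
    QuotientGroup.mk_mem_center_of_mem (hU hu)
  have hsplit : ∀ u ∈ ι₁ '' R₁ ∪ ι₂ '' R₂, (a u = q u ∧ b u = 1) ∨ (a u = 1 ∧ b u = q u) := by
    rintro _ (⟨r, -, rfl⟩ | ⟨r, -, rfl⟩)
    · simp [a, b, h₁₁, h₂₁]
    · simp [a, b, h₁₂, h₂₂]
  refine Subgroup.apply_eq_mul_of_mem_normalClosure (a := a) (b := b) (c := q)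
    (fun u hu => ?_) (fun u hu => ?_) hq (fun u hu => ?_) (hR ▸ hx) <;>
  rcases hsplit u hu with ⟨ha, hb⟩ | ⟨ha, hb⟩ <;> simp [ha, hb, hq u hu]

namespace hopfMultiplier

variable {F A B : Type*} [Group F] [Group A] [Group B] {R : Subgroup F} [R.Normal]

/- `QuotientGroup.mk` lands in the bare quotient, whose multiplication does not unify reducibly
with the one of `hopfMultiplier R`; this bundled version does. -/
def mk : (R ⊓ commutator F : Subgroup F) →* hopfMultiplier R := QuotientGroup.mk' _

theorem mk_surjective : Function.Surjective (mk (R := R)) := QuotientGroup.mk'_surjective _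

theorem mk_eq_mk_iff {x y : (R ⊓ commutator F : Subgroup F)} :
    mk x = mk y ↔ ((x : F) : F ⧸ ⁅R, (⊤ : Subgroup F)⁆) = y :=
  QuotientGroup.eq.trans <| Subgroup.mem_subgroupOf.trans QuotientGroup.eq.symm

protected theorem mul_comm (x y : hopfMultiplier R) : x * y = y * x := by
  obtain ⟨a, rfl⟩ := mk_surjective x
  obtain ⟨b, rfl⟩ := mk_surjective y
  rw [← map_mul, ← map_mul, mk_eq_mk_iff, Subgroup.coe_mul, Subgroup.coe_mul,
    QuotientGroup.mk_mul, QuotientGroup.mk_mul]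
  exact Subgroup.mem_center_iff.1 (QuotientGroup.mk_mem_center_of_mem b.2.1) _

def map {R₁ : Subgroup A} [R₁.Normal] (f : A →* F) (hf : R₁ ≤ R.comap f) :
    hopfMultiplier R₁ →* hopfMultiplier R :=
  QuotientGroup.map _ _
    ((f.comp (R₁ ⊓ commutator A).subtype).codRestrict (R ⊓ commutator F) fun x =>
      ⟨hf x.2.1, Subgroup.commutator_le_comap_commutator f le_top le_top x.2.2⟩)
    fun _ hx => Subgroup.commutator_le_comap_commutator f hf le_top hx

theorem map_mk {R₁ : Subgroup A} [R₁.Normal] (f : A →* F) (hf : R₁ ≤ R.comap f)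
    (x : (R₁ ⊓ commutator A : Subgroup A)) :
    map f hf (mk x) =
      mk ⟨f x, hf x.2.1, Subgroup.commutator_le_comap_commutator f le_top le_top x.2.2⟩ :=
  rfl

theorem nonempty_mulEquiv_prod_of_retractions {R₁ : Subgroup A} [R₁.Normal]
    {R₂ : Subgroup B} [R₂.Normal] (ι₁ : A →* F) (ι₂ : B →* F) (π₁ : F →* A) (π₂ : F →* B)
    (h₁₁ : ∀ a, π₁ (ι₁ a) = a) (h₁₂ : ∀ b, π₁ (ι₂ b) = 1)
    (h₂₁ : ∀ a, π₂ (ι₁ a) = 1) (h₂₂ : ∀ b, π₂ (ι₂ b) = b)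
    (hR : R = Subgroup.normalClosure (ι₁ '' R₁ ∪ ι₂ '' R₂)) :
    Nonempty (hopfMultiplier R ≃* hopfMultiplier R₁ × hopfMultiplier R₂) := by
  have hU : ι₁ '' R₁ ∪ ι₂ '' R₂ ⊆ R := hR ▸ Subgroup.subset_normalClosure
  have hι₁ : R₁ ≤ R.comap ι₁ := fun r hr => hU (.inl ⟨r, hr, rfl⟩)
  have hι₂ : R₂ ≤ R.comap ι₂ := fun r hr => hU (.inr ⟨r, hr, rfl⟩)
  have hπ₁ : R ≤ R₁.comap π₁ := hR ▸ Subgroup.normalClosure_le_normal <| by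
    rintro _ (⟨r, hr, rfl⟩ | ⟨r, -, rfl⟩)
    · simpa [h₁₁] using hr
    · simp [h₁₂]
  have hπ₂ : R ≤ R₂.comap π₂ := hR ▸ Subgroup.normalClosure_le_normal <| by
    rintro _ (⟨r, -, rfl⟩ | ⟨r, hr, rfl⟩)
    · simp [h₂₁]
    · simpa [h₂₂] using hr
  let Φ := (map π₁ hπ₁).prod (map π₂ hπ₂)
  let Ψ := (map ι₁ hι₁).noncommCoprod (map ι₂ hι₂) fun _ _ => hopfMultiplier.mul_comm _ _
  refine ⟨Φ.toMulEquiv Ψ (MonoidHom.ext fun x => ?_) (MonoidHom.ext fun ⟨x, y⟩ => ?_)⟩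
  · obtain ⟨w, rfl⟩ := mk_surjective x
    change map ι₁ hι₁ (map π₁ hπ₁ (mk w)) * map ι₂ hι₂ (map π₂ hπ₂ (mk w)) = mk w
    rw [map_mk, map_mk, map_mk, map_mk, ← map_mul, mk_eq_mk_iff, Subgroup.coe_mul,
      QuotientGroup.mk_mul]
    exact (QuotientGroup.mk_eq_mk_mul_mk_of_retractions ι₁ ι₂ π₁ π₂ h₁₁ h₁₂ h₂₁ h₂₂ hR w.2.1).symm
  · obtain ⟨a, rfl⟩ := mk_surjective x
    obtain ⟨b, rfl⟩ := mk_surjective y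
    change (map π₁ hπ₁ (map ι₁ hι₁ (mk a) * map ι₂ hι₂ (mk b)),
      map π₂ hπ₂ (map ι₁ hι₁ (mk a) * map ι₂ hι₂ (mk b))) = (mk a, mk b)
    simp only [map_mk, ← map_mul]
    congr <;> simp [h₁₁, h₁₂, h₂₁, h₂₂]

end hopfMultiplier

namespace FreeGroup

variable {X₁ X₂ : Type*}

def projLeft : FreeGroup (X₁ ⊕ X₂) →* FreeGroup X₁ := lift (Sum.elim of 1)

def projRight : FreeGroup (X₁ ⊕ X₂) →* FreeGroup X₂ := lift (Sum.elim 1 of)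

@[simp] theorem projLeft_map_inl (w : FreeGroup X₁) :
    projLeft (map (Sum.inl : X₁ → X₁ ⊕ X₂) w) = w := by
  induction w using FreeGroup.induction_on <;> simp_all [projLeft]

@[simp] theorem projLeft_map_inr (w : FreeGroup X₂) :
    projLeft (map (Sum.inr : X₂ → X₁ ⊕ X₂) w) = 1 := by
  induction w using FreeGroup.induction_on <;> simp_all [projLeft]

@[simp] theorem projRight_map_inl (w : FreeGroup X₁) :
    projRight (map (Sum.inl : X₁ → X₁ ⊕ X₂) w) = 1 := by
  induction w using FreeGroup.induction_on <;> simp_all [projRight]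

@[simp] theorem projRight_map_inr (w : FreeGroup X₂) :
    projRight (map (Sum.inr : X₂ → X₁ ⊕ X₂) w) = w := by
  induction w using FreeGroup.induction_on <;> simp_all [projRight]

end FreeGroup

section inducedPresentation

variable {X₁ X₂ G₁ G₂ : Type*} [Group G₁] [Group G₂]
  (φ₁ : FreeGroup X₁ →* G₁) (φ₂ : FreeGroup X₂ →* G₂)

@[simp] theorem inducedPresentation_map_inl (w : FreeGroup X₁) :
    inducedPresentation φ₁ φ₂ (FreeGroup.map Sum.inl w) = Coprod.inl (φ₁ w) := by
  induction w using FreeGroup.induction_on <;> simp_all [inducedPresentation]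

@[simp] theorem inducedPresentation_map_inr (w : FreeGroup X₂) :
    inducedPresentation φ₁ φ₂ (FreeGroup.map Sum.inr w) = Coprod.inr (φ₂ w) := by
  induction w using FreeGroup.induction_on <;> simp_all [inducedPresentation]

theorem ker_inducedPresentation (h₁ : Function.Surjective φ₁) (h₂ : Function.Surjective φ₂) :
    (inducedPresentation φ₁ φ₂).ker = Subgroup.normalClosure
      (FreeGroup.map Sum.inl '' (φ₁.ker : Set (FreeGroup X₁)) ∪
        FreeGroup.map Sum.inr '' (φ₂.ker : Set (FreeGroup X₂))) := by
  set N := Subgroup.normalClosure (FreeGroup.map Sum.inl '' (φ₁.ker : Set (FreeGroup X₁)) ∪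
    FreeGroup.map Sum.inr '' (φ₂.ker : Set (FreeGroup X₂)))
  refine le_antisymm (fun w hw => ?_) (Subgroup.normalClosure_le_normal ?_)
  · let ψ₁ := φ₁.liftOfRightInverse _ (Function.rightInverse_surjInv h₁)
      ⟨(QuotientGroup.mk' N).comp (FreeGroup.map Sum.inl), fun r hr =>
        (QuotientGroup.eq_one_iff _).2 (Subgroup.subset_normalClosure (.inl ⟨r, hr, rfl⟩))⟩
    let ψ₂ := φ₂.liftOfRightInverse _ (Function.rightInverse_surjInv h₂)
      ⟨(QuotientGroup.mk' N).comp (FreeGroup.map Sum.inr), fun r hr =>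
        (QuotientGroup.eq_one_iff _).2 (Subgroup.subset_normalClosure (.inr ⟨r, hr, rfl⟩))⟩
    have hψ : (Coprod.lift ψ₁ ψ₂).comp (inducedPresentation φ₁ φ₂) = QuotientGroup.mk' N :=
      FreeGroup.ext_hom _ _ fun x => by
        rcases x with x | x <;> simp [ψ₁, ψ₂, inducedPresentation]
    rw [← QuotientGroup.eq_one_iff, ← QuotientGroup.mk'_apply, ← hψ, MonoidHom.comp_apply, hw,
      map_one]
  · rintro _ (⟨r, hr, rfl⟩ | ⟨r, hr, rfl⟩) <;> simp_all [MonoidHom.mem_ker]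

end inducedPresentation

/-- Let `φᵢ : F(Xᵢ) → Gᵢ` be surjective homomorphisms from free groups with
kernels `Rᵢ`, and let `φ : F(X₁ ⊕ X₂) → G₁ ∗ G₂` be the induced surjection onto the free
product, with kernel `R`.  Then
`(R ∩ [F,F])/[R,F] ≅ (R₁ ∩ [F₁,F₁])/[R₁,F₁] × (R₂ ∩ [F₂,F₂])/[R₂,F₂]`,
i.e. `M(G₁ ∗ G₂) ≅ M(G₁) ⊕ M(G₂)` in terms of Hopf's formula. -/
theorem hopfMultiplier_coprod
    {X₁ X₂ G₁ G₂ : Type*} [Group G₁] [Group G₂]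
    (φ₁ : FreeGroup X₁ →* G₁) (φ₂ : FreeGroup X₂ →* G₂)
    (h₁ : Function.Surjective φ₁) (h₂ : Function.Surjective φ₂) :
    Nonempty (hopfMultiplier (inducedPresentation φ₁ φ₂).ker ≃*
      hopfMultiplier φ₁.ker × hopfMultiplier φ₂.ker) :=
  hopfMultiplier.nonempty_mulEquiv_prod_of_retractions (FreeGroup.map Sum.inl)
    (FreeGroup.map Sum.inr) FreeGroup.projLeft FreeGroup.projRight FreeGroup.projLeft_map_inl
    FreeGroup.projLeft_map_inr FreeGroup.projRight_map_inl FreeGroup.projRight_map_inr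
    (ker_inducedPresentation φ₁ φ₂ h₁ h₂)
end
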